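/- Let f = (f_1,…,f_n) be polynomials in R[x] with each deg f_i ≥ 1, δ_f = Σ_{i=1}^n (deg f_i − 1), and let δ_1, δ_2 ≥ 0 be integers. For i = 1,2 let L_i be an R-linear functional on R[x] that annuls (f)^{≤δ_f+δ_i}_x. Then for every polynomial F ∈ R[x] of total degree ≤ δ_f + δ_1 + δ_2 + 1, the value L_1(x_*).( L_2(y_*).det‖∇f(x,y) ∇F(x,y); f(x) F(x)‖ ) is independent of the choices of the monotonous difference derivatives ∇f_i of the f_i and of the monotonous difference derivative ∇F of F; i.e. any two such choices yield the same element of R. -/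

import Mathlib

open MvPolynomial Finset

noncomputable section

variable {R : Type*} [CommRing R] {n : ℕ}

/-- Total degree of a multivariate polynomial, valued in `WithBot ℤ`,
with the convention `deg 0 = ⊥` (i.e. `-∞`). -/
def mdeg {σ S : Type*} [CommSemiring S] (F : MvPolynomial σ S) : WithBot ℤ :=
  F.support.sup fun m => ((m.sum fun _ e => e : ℕ) : ℤ)

/-- The embedding `R[x] → R[x,y]`, `x_i ↦ x_i` (the x-variables are `Sum.inl`,
the y-variables are `Sum.inr`). -/
def toX : MvPolynomial (Fin n) R →ₐ[R] MvPolynomial (Fin n ⊕ Fin n) R :=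
  rename Sum.inl

/-- The embedding `R[x] → R[x,y]`, `x_i ↦ y_i`. -/
def toY : MvPolynomial (Fin n) R →ₐ[R] MvPolynomial (Fin n ⊕ Fin n) R :=
  rename Sum.inr

/-- `D = (∇¹F, …, ∇ⁿF)` is a difference derivative of `F`:
`∑ k, (x_k - y_k) * ∇ᵏF(x,y) = F(x) - F(y)`. -/
def IsDiffDeriv (F : MvPolynomial (Fin n) R)
    (D : Fin n → MvPolynomial (Fin n ⊕ Fin n) R) : Prop :=
  ∑ k : Fin n, (X (Sum.inl k) - X (Sum.inr k)) * D k = toX F - toY F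

/-- A difference derivative of `F` is monotonous if each component has total degree
`≤ deg F - 1` (equivalently `deg (∇ᵏF) + 1 ≤ deg F` in `WithBot ℤ`). -/
def IsMonotonous (F : MvPolynomial (Fin n) R)
    (D : Fin n → MvPolynomial (Fin n ⊕ Fin n) R) : Prop :=
  ∀ k, mdeg (D k) + 1 ≤ mdeg F

/-- `δ_f = ∑ᵢ (deg fᵢ - 1)`. -/
def deltaF (f : Fin n → MvPolynomial (Fin n) R) : ℤ :=
  ∑ i, (((f i).totalDegree : ℤ) - 1)

/-- `(f)^{≤ d}_x`: sums `∑ fᵢ gᵢ` with `deg fᵢ + deg gᵢ ≤ d` for every `i`. -/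
def boundedSpan (f : Fin n → MvPolynomial (Fin n) R) (d : WithBot ℤ) :
    Set (MvPolynomial (Fin n) R) :=
  {F | ∃ g : Fin n → MvPolynomial (Fin n) R,
    F = ∑ i, f i * g i ∧ ∀ i, mdeg (f i) + mdeg (g i) ≤ d}

/-- A linear functional `L` annuls a set `S` if it vanishes on it. -/
def Annuls (L : MvPolynomial (Fin n) R →ₗ[R] R) (S : Set (MvPolynomial (Fin n) R)) : Prop :=
  ∀ F ∈ S, L F = 0

/-- `L(y_*).P` : apply the functional `L` to the `y`-part of `P ∈ R[x,y]`,
i.e. if `P = ∑_α A_α(x) y^α` then `L(y_*).P = ∑_α L(y^α) • A_α(x)`. -/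
def applyY (L : MvPolynomial (Fin n) R →ₗ[R] R) (P : MvPolynomial (Fin n ⊕ Fin n) R) :
    MvPolynomial (Fin n) R :=
  ∑ m ∈ P.support,
    C (L (monomial (Finsupp.sumFinsuppAddEquivProdFinsupp m).2 (1 : R)) * P.coeff m) *
      monomial (Finsupp.sumFinsuppAddEquivProdFinsupp m).1 (1 : R)

/-- `det‖∇f(x,y) ∇F(x,y); f(x) F(x)‖` : the `(n+1) × (n+1)` determinant whose entry `(k,i)`
is `∇ᵏfᵢ(x,y)` for `k, i ≤ n`, entry `(k, n+1)` is `∇ᵏF(x,y)`, entry `(n+1, i)` is `fᵢ(x)`,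
and entry `(n+1, n+1)` is `F(x)`.  Here `Df i` is the tuple `(∇¹fᵢ, …, ∇ⁿfᵢ)`. -/
def ddetX (f : Fin n → MvPolynomial (Fin n) R)
    (Df : Fin n → Fin n → MvPolynomial (Fin n ⊕ Fin n) R)
    (F : MvPolynomial (Fin n) R) (DF : Fin n → MvPolynomial (Fin n ⊕ Fin n) R) :
    MvPolynomial (Fin n ⊕ Fin n) R :=
  Matrix.det (Matrix.of fun k i : Fin (n + 1) =>
    if hk : (k : ℕ) < n then
      if hi : (i : ℕ) < n then Df ⟨i, hi⟩ ⟨k, hk⟩ else DF ⟨k, hk⟩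
    else
      if hi : (i : ℕ) < n then toX (f ⟨i, hi⟩) else toX F)

/-- `det‖∇f(x,y) ∇F(x,y); f(y) F(y)‖` : as `ddetX` but with last row `(f₁(y),…,fₙ(y),F(y))`. -/
def ddetY (f : Fin n → MvPolynomial (Fin n) R)
    (Df : Fin n → Fin n → MvPolynomial (Fin n ⊕ Fin n) R)
    (F : MvPolynomial (Fin n) R) (DF : Fin n → MvPolynomial (Fin n ⊕ Fin n) R) :
    MvPolynomial (Fin n ⊕ Fin n) R :=
  Matrix.det (Matrix.of fun k i : Fin (n + 1) =>
    if hk : (k : ℕ) < n then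
      if hi : (i : ℕ) < n then Df ⟨i, hi⟩ ⟨k, hk⟩ else DF ⟨k, hk⟩
    else
      if hi : (i : ℕ) < n then toY (f ⟨i, hi⟩) else toY F)

/-!
Two admissible choices can be connected by changing one column `j` of the bordered matrix at a
time. By linearity in that column, each change adds the determinant whose column `j` is
`D = ∇'G - ∇G` with last entry `0`. Since `∑ (x_k - y_k) D_k = 0` and `deg D < d_j`, Koszul exactness for
`x - y` (transported from the variables `y` by `y ↦ x - y`) writes `D` as a combination of the
columns `(x_b - y_b) e_a - (x_a - y_a) e_b` with coefficients of degree `≤ d_j - 2`. For such a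
column, the row operation with `(x - y, -1)` turns row `b` into `-G(y)` and the column into `e_a`.
Every Leibniz term then contains `Gᵢ(x) Gⱼ(y)` times a factor whose degree is small enough that
either `L₁` annuls the `x`-part or `L₂` annuls the `y`-part.
-/

section Degree

variable {σ S : Type*} [CommSemiring S]

lemma mdeg_le_iff {P : MvPolynomial σ S} {d : WithBot ℤ} :
    mdeg P ≤ d ↔ ∀ m ∈ P.support, ((m.degree : ℤ) : WithBot ℤ) ≤ d :=
  Finset.sup_le_iff

lemma le_mdeg {P : MvPolynomial σ S} {m : σ →₀ ℕ} (h : m ∈ P.support) :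
    ((m.degree : ℤ) : WithBot ℤ) ≤ mdeg P :=
  mdeg_le_iff.1 le_rfl m h

@[simp] lemma mdeg_zero : mdeg (0 : MvPolynomial σ S) = ⊥ := rfl

lemma mdeg_eq_totalDegree {P : MvPolynomial σ S} (hP : P ≠ 0) :
    mdeg P = (P.totalDegree : ℤ) := by
  refine le_antisymm (mdeg_le_iff.2 fun m hm => ?_) ?_
  · exact_mod_cast le_totalDegree hm
  · obtain ⟨m, hm, hmax⟩ := Finset.exists_mem_eq_sup P.support (support_nonempty.2 hP)
      fun m => m.sum fun _ e => e
    rw [totalDegree, hmax]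
    exact le_mdeg hm

lemma mdeg_le_totalDegree (P : MvPolynomial σ S) : mdeg P ≤ (P.totalDegree : ℤ) :=
  mdeg_le_iff.2 fun _ hm => by exact_mod_cast le_totalDegree hm

lemma mdeg_monomial_le (m : σ →₀ ℕ) (c : S) : mdeg (monomial m c) ≤ (m.degree : ℤ) := by
  classical
  refine mdeg_le_iff.2 fun m' hm' => ?_
  rw [Finset.mem_singleton.1 (support_monomial_subset hm')]

lemma mdeg_one_le : mdeg (1 : MvPolynomial σ S) ≤ (0 : ℤ) := by
  simpa using mdeg_monomial_le (0 : σ →₀ ℕ) (1 : S)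

lemma mdeg_add_le (P Q : MvPolynomial σ S) : mdeg (P + Q) ≤ max (mdeg P) (mdeg Q) := by
  classical
  refine mdeg_le_iff.2 fun m hm => ?_
  rcases Finset.mem_union.1 (support_add hm) with h | h
  · exact le_max_of_le_left (le_mdeg h)
  · exact le_max_of_le_right (le_mdeg h)

lemma mdeg_sum_le {ι : Type*} (s : Finset ι) (P : ι → MvPolynomial σ S) {d : WithBot ℤ}
    (h : ∀ i ∈ s, mdeg (P i) ≤ d) : mdeg (∑ i ∈ s, P i) ≤ d := by
  classical
  induction s using Finset.induction with
  | empty => simp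
  | insert a s ha ih =>
    rw [Finset.sum_insert ha]
    exact (mdeg_add_le _ _).trans (max_le (h a (mem_insert_self a s))
      (ih fun i hi => h i (mem_insert_of_mem hi)))

lemma mdeg_mul_le (P Q : MvPolynomial σ S) : mdeg (P * Q) ≤ mdeg P + mdeg Q := by
  classical
  refine mdeg_le_iff.2 fun m hm => ?_
  obtain ⟨m₁, hm₁, m₂, hm₂, rfl⟩ := Finset.mem_add.1 (support_mul P Q hm)
  rw [map_add, Nat.cast_add, WithBot.coe_add]
  exact add_le_add (le_mdeg hm₁) (le_mdeg hm₂)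

lemma mdeg_prod_le {ι : Type*} (s : Finset ι) (P : ι → MvPolynomial σ S) (d : ι → ℤ)
    (h : ∀ i ∈ s, mdeg (P i) ≤ d i) : mdeg (∏ i ∈ s, P i) ≤ (∑ i ∈ s, d i : ℤ) := by
  classical
  induction s using Finset.induction with
  | empty => simpa using mdeg_one_le
  | insert a s ha ih =>
    rw [Finset.prod_insert ha, Finset.sum_insert ha, WithBot.coe_add]
    exact (mdeg_mul_le _ _).trans (add_le_add (h a (mem_insert_self a s))
      (ih fun i hi => h i (mem_insert_of_mem hi)))

lemma mdeg_le_sub_one {a : WithBot ℤ} {d : ℤ} (h : a + 1 ≤ d) : a ≤ (d - 1 : ℤ) := by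
  induction a with
  | bot => exact bot_le
  | coe a =>
    have : a + 1 ≤ d := by exact_mod_cast h
    exact_mod_cast (by omega : a ≤ d - 1)

end Degree

lemma mdeg_neg {σ : Type*} (P : MvPolynomial σ R) : mdeg (-P) = mdeg P := by
  simp [mdeg, support_neg]

lemma mdeg_sub_le {σ : Type*} (P Q : MvPolynomial σ R) :
    mdeg (P - Q) ≤ max (mdeg P) (mdeg Q) := by
  simpa [sub_eq_add_neg, mdeg_neg] using mdeg_add_le P (-Q)

lemma MvPolynomial.basisMonomials_constr_monomial {σ M : Type*} [AddCommMonoid M] [Module R M]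
    (g : (σ →₀ ℕ) → M) (m : σ →₀ ℕ) (r : R) :
    (basisMonomials σ R).constr R g (monomial m r) = r • g m := by
  have : monomial m r = r • basisMonomials σ R m := by
    rw [coe_basisMonomials, smul_monomial, smul_eq_mul, mul_one]
  rw [this, map_smul, Module.Basis.constr_basis]

lemma X_mul_monomial_eq {σ : Type*} (s : σ) (μ : σ →₀ ℕ) (c : R) :
    X s * monomial μ c = monomial (μ + Finsupp.single s 1) c := by
  rw [X, monomial_mul, one_mul, add_comm]

lemma X_mul_monomial_sub_single {σ : Type*} {μ : σ →₀ ℕ} {s : σ} (hs : μ s ≠ 0) (c : R) :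
    X s * monomial (μ - Finsupp.single s 1) c = monomial μ c := by
  rw [X_mul_monomial_eq, tsub_add_cancel_of_le (Finsupp.single_le_iff.2 (by omega))]

section ApplyY

local notation "splitXY" => Finsupp.sumFinsuppAddEquivProdFinsupp

lemma toX_monomial_mul_toY_monomial (a b : Fin n →₀ ℕ) (c c' : R) :
    toX (monomial a c) * toY (monomial b c') = monomial (a.sumElim b) (c * c') := by
  rw [toX, toY, rename_monomial, rename_monomial, monomial_mul, Finsupp.sumElim_eq_add]

lemma splitXY_sumElim (a b : Fin n →₀ ℕ) : splitXY (a.sumElim b) = (a, b) := by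
  simp

lemma degree_splitXY (m : Fin n ⊕ Fin n →₀ ℕ) :
    (splitXY m).1.degree + (splitXY m).2.degree = m.degree := by
  conv_rhs => rw [← AddEquiv.symm_apply_apply splitXY m]
  rw [Finsupp.sumFinsuppAddEquivProdFinsupp_symm_apply, Finsupp.sumElim_eq_add, map_add,
    Finsupp.degree_mapDomain, Finsupp.degree_mapDomain]

lemma monomial_eq_toX_mul_toY (m : Fin n ⊕ Fin n →₀ ℕ) (c : R) :
    monomial m c = toX (monomial (splitXY m).1 c) * toY (monomial (splitXY m).2 1) := by
  rw [toX_monomial_mul_toY_monomial, mul_one, ← Finsupp.sumFinsuppAddEquivProdFinsupp_symm_apply,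
    AddEquiv.symm_apply_apply]

def applyYLinear (L : MvPolynomial (Fin n) R →ₗ[R] R) :
    MvPolynomial (Fin n ⊕ Fin n) R →ₗ[R] MvPolynomial (Fin n) R :=
  (basisMonomials _ R).constr R fun m => L (monomial (splitXY m).2 1) • monomial (splitXY m).1 1

lemma applyYLinear_monomial (L : MvPolynomial (Fin n) R →ₗ[R] R) (m : Fin n ⊕ Fin n →₀ ℕ)
    (c : R) :
    applyYLinear L (monomial m c) = L (monomial (splitXY m).2 1) • monomial (splitXY m).1 c := by
  rw [applyYLinear, basisMonomials_constr_monomial, smul_comm, smul_monomial, smul_eq_mul,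
    mul_one]

lemma applyY_eq_applyYLinear (L : MvPolynomial (Fin n) R →ₗ[R] R)
    (P : MvPolynomial (Fin n ⊕ Fin n) R) : applyY L P = applyYLinear L P := by
  conv_rhs => rw [P.as_sum, map_sum]
  refine Finset.sum_congr rfl fun m _ => ?_
  rw [applyYLinear_monomial, C_mul_monomial, mul_one, smul_monomial, smul_eq_mul]

lemma applyYLinear_toX_mul_toY (L : MvPolynomial (Fin n) R →ₗ[R] R)
    (A B : MvPolynomial (Fin n) R) : applyYLinear L (toX A * toY B) = L B • A := by
  induction A using MvPolynomial.induction_on' with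
  | monomial a c =>
    induction B using MvPolynomial.induction_on' with
    | monomial b c' =>
      have : monomial b c' = c' • monomial b (1 : R) := by
        rw [smul_monomial, smul_eq_mul, mul_one]
      rw [toX_monomial_mul_toY_monomial, applyYLinear_monomial, splitXY_sumElim, this, map_smul]
      simp only [smul_monomial, smul_eq_mul]
      ring_nf
    | add p q hp hq => rw [map_add, mul_add, map_add, hp, hq, map_add, add_smul]
  | add p q hp hq => rw [map_add, add_mul, map_add, hp, hq, smul_add]

def applyXY (L₁ L₂ : MvPolynomial (Fin n) R →ₗ[R] R) :
    MvPolynomial (Fin n ⊕ Fin n) R →ₗ[R] R :=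
  L₁ ∘ₗ applyYLinear L₂

lemma applyXY_apply (L₁ L₂ : MvPolynomial (Fin n) R →ₗ[R] R) (P : MvPolynomial (Fin n ⊕ Fin n) R) :
    applyXY L₁ L₂ P = L₁ (applyY L₂ P) := by
  rw [applyXY, LinearMap.comp_apply, applyY_eq_applyYLinear]

lemma applyXY_toX_mul_toY (L₁ L₂ : MvPolynomial (Fin n) R →ₗ[R] R) (A B : MvPolynomial (Fin n) R) :
    applyXY L₁ L₂ (toX A * toY B) = L₁ A * L₂ B := by
  rw [applyXY, LinearMap.comp_apply, applyYLinear_toX_mul_toY, map_smul, smul_eq_mul, mul_comm]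

lemma applyXY_toX_mul_toY_mul_eq_zero (L₁ L₂ : MvPolynomial (Fin n) R →ₗ[R] R)
    (A B : MvPolynomial (Fin n) R) (Q : MvPolynomial (Fin n ⊕ Fin n) R) (e : ℤ)
    (hQ : mdeg Q ≤ e)
    (hAB : ∀ p q : MvPolynomial (Fin n) R, (p.totalDegree + q.totalDegree : ℤ) ≤ e →
      L₁ (A * p) = 0 ∨ L₂ (B * q) = 0) :
    applyXY L₁ L₂ (toX A * toY B * Q) = 0 := by
  rw [Q.as_sum, Finset.mul_sum, map_sum]
  refine Finset.sum_eq_zero fun m hm => ?_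
  have hdeg : ((splitXY m).1.degree + (splitXY m).2.degree : ℤ) ≤ e := by
    have := (le_mdeg hm).trans hQ
    rw [← degree_splitXY] at this
    exact_mod_cast this
  rw [monomial_eq_toX_mul_toY, mul_mul_mul_comm, ← map_mul, ← map_mul,
    applyXY_toX_mul_toY]
  have hmon : ∀ (s : Fin n →₀ ℕ) (c : R), ((monomial s c).totalDegree : ℤ) ≤ s.degree :=
    fun s c => by exact_mod_cast totalDegree_monomial_le s c
  rcases hAB _ _ ((add_le_add (hmon _ _) (hmon _ _)).trans hdeg) with h | h
  · rw [h, zero_mul]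
  · rw [h, mul_zero]

end ApplyY

section Koszul

variable {σ ι : Type*} [LinearOrder ι] (v : ι → σ)

def IsLeadVar (μ : σ →₀ ℕ) (b : ι) : Prop :=
  μ (v b) ≠ 0 ∧ ∀ k < b, μ (v k) = 0

open Classical in
/-- `X (v b) * leadQuot v b P` is the part of `P` made of monomials with leading variable `v b`. -/
def leadQuot (b : ι) : MvPolynomial σ R →ₗ[R] MvPolynomial σ R :=
  (basisMonomials σ R).constr R fun μ =>
    if IsLeadVar v μ b then monomial (μ - Finsupp.single (v b) 1) 1 else 0

open Classical in
def koszulCoeff (a b : ι) : MvPolynomial σ R →ₗ[R] MvPolynomial σ R :=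
  (basisMonomials σ R).constr R fun μ =>
    if a ≠ b ∧ IsLeadVar v (μ + Finsupp.single (v a) 1) b then
      monomial (μ - Finsupp.single (v b) 1) 1 else 0

variable {v}

lemma IsLeadVar.unique {μ : σ →₀ ℕ} {b b' : ι} (h : IsLeadVar v μ b) (h' : IsLeadVar v μ b') :
    b = b' := by
  rcases lt_trichotomy b b' with hlt | heq | hgt
  · exact absurd (h'.2 b hlt) h.1
  · exact heq
  · exact absurd (h.2 b' hgt) h'.1

lemma exists_isLeadVar [Fintype ι] {μ : σ →₀ ℕ} {a : ι} (ha : μ (v a) ≠ 0) :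
    ∃ b, IsLeadVar v μ b := by
  classical
  have hne : (univ.filter fun k => μ (v k) ≠ 0).Nonempty := ⟨a, by simpa using ha⟩
  refine ⟨_, (Finset.mem_filter.1 (Finset.min'_mem _ hne)).2, fun k hk => ?_⟩
  by_contra h
  exact (Finset.min'_le _ k (by simpa using h)).not_gt hk

open Classical in
lemma leadQuot_monomial (b : ι) (μ : σ →₀ ℕ) (c : R) :
    leadQuot v b (monomial μ c) =
      if IsLeadVar v μ b then monomial (μ - Finsupp.single (v b) 1) c else 0 := by
  rw [leadQuot, basisMonomials_constr_monomial]
  split_ifs <;> simp [smul_monomial]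

open Classical in
lemma koszulCoeff_monomial (a b : ι) (μ : σ →₀ ℕ) (c : R) :
    koszulCoeff v a b (monomial μ c) =
      if a ≠ b ∧ IsLeadVar v (μ + Finsupp.single (v a) 1) b then
        monomial (μ - Finsupp.single (v b) 1) c else 0 := by
  rw [koszulCoeff, basisMonomials_constr_monomial]
  split_ifs <;> simp [smul_monomial]

lemma sum_X_mul_leadQuot_X_mul [Fintype ι] (a : ι) (D : MvPolynomial σ R) :
    ∑ b, X (v b) * leadQuot v b (X (v a) * D) = X (v a) * D := by
  classical
  induction D using MvPolynomial.induction_on' with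
  | monomial μ c =>
    have hμ : (μ + Finsupp.single (v a) 1 : σ →₀ ℕ) (v a) ≠ 0 := by simp
    obtain ⟨b, hb⟩ := exists_isLeadVar hμ
    rw [X_mul_monomial_eq, Finset.sum_eq_single b, leadQuot_monomial, if_pos hb,
      X_mul_monomial_sub_single hb.1]
    · intro b' _ hb'
      rw [leadQuot_monomial, if_neg fun h => hb' (h.unique hb), mul_zero]
    · simp
  | add p q hp hq => simp only [mul_add, map_add, Finset.sum_add_distrib, hp, hq]

lemma X_mul_koszulCoeff (hv : Function.Injective v) (a b : ι) (D : MvPolynomial σ R) :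
    X (v a) * koszulCoeff v a b D = if a = b then 0 else leadQuot v b (X (v a) * D) := by
  classical
  induction D using MvPolynomial.induction_on' with
  | monomial μ c =>
    rw [koszulCoeff_monomial, X_mul_monomial_eq, leadQuot_monomial]
    by_cases hab : a = b
    · simp [hab]
    rw [if_neg hab]
    by_cases h : IsLeadVar v (μ + Finsupp.single (v a) 1) b
    · have hexp : μ - Finsupp.single (v b) 1 + Finsupp.single (v a) 1 =
          μ + Finsupp.single (v a) 1 - Finsupp.single (v b) 1 := by
        ext s
        have : v a ≠ v b := hv.ne hab
        simp only [Finsupp.add_apply, Finsupp.tsub_apply, Finsupp.single_apply]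
        split_ifs with h₁ h₂ <;> first | omega | exact absurd (h₂.trans h₁.symm) this
      rw [if_pos ⟨hab, h⟩, if_pos h, X_mul_monomial_eq, hexp]
    · rw [if_neg fun h' => h h'.2, if_neg h, mul_zero]
  | add p q hp hq =>
    rw [map_add, mul_add, hp, hq]
    split_ifs <;> simp [mul_add]

lemma mdeg_koszulCoeff_le (hv : Function.Injective v) (a b : ι) {D : MvPolynomial σ R} {e : ℤ}
    (hD : mdeg D ≤ e) : mdeg (koszulCoeff v a b D) ≤ (e - 1 : ℤ) := by
  classical
  rw [D.as_sum, map_sum]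
  refine mdeg_sum_le _ _ fun μ hμ => ?_
  rw [koszulCoeff_monomial]
  split_ifs with h
  · have hb : μ (v b) ≠ 0 := by
      simpa [Finsupp.single_apply, hv.ne h.1] using h.2.1
    have hdeg : (μ - Finsupp.single (v b) 1).degree + 1 = μ.degree := by
      conv_rhs =>
        rw [← tsub_add_cancel_of_le (Finsupp.single_le_iff.2 (Nat.one_le_iff_ne_zero.2 hb))]
      rw [map_add, Finsupp.degree_single]
    have hμe : (μ.degree : ℤ) ≤ e := by exact_mod_cast (le_mdeg hμ).trans hD
    exact (mdeg_monomial_le _ _).trans (by exact_mod_cast (by omega : _ ≤ e - 1))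
  · simp

lemma ite_zero_eq_sub_ite {M : Type*} [AddGroup M] (p : Prop) [Decidable p] (x : M) :
    (if p then 0 else x) = x - if p then x else 0 := by
  split_ifs <;> simp

/-- For `a ≠ b`, `X (v a) * c a b` is the part of `X (v a) * D a` with leading variable `v b`;
multiplying the identity by `X (v m)` and sorting `∑ₐ X (v a) * D a = 0` by leading variable
proves it. -/
theorem exists_koszul_of_sum_X_mul_eq_zero [Fintype ι] (hv : Function.Injective v)
    (D : ι → MvPolynomial σ R) (hD : ∑ k, X (v k) * D k = 0) (e : ℤ)
    (hdeg : ∀ k, mdeg (D k) ≤ e) :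
    ∃ c : ι → ι → MvPolynomial σ R, (∀ a b, mdeg (c a b) ≤ (e - 1 : ℤ)) ∧
      ∀ m, D m = ∑ b, X (v b) * c m b - ∑ a, X (v a) * c a m := by
  refine ⟨fun a b => koszulCoeff v a b (D a), fun a b => mdeg_koszulCoeff_le hv a b (hdeg a),
    fun m => ?_⟩
  rw [← X_mul_cancel_left_iff (i := v m)]
  have h₁ : X (v m) * ∑ b, X (v b) * koszulCoeff v m b (D m) =
      X (v m) * D m - X (v m) * leadQuot v m (X (v m) * D m) := by
    simp only [Finset.mul_sum, mul_left_comm (X (v m)), X_mul_koszulCoeff hv,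
      ite_zero_eq_sub_ite, mul_sub, mul_ite, mul_zero, Finset.sum_sub_distrib, Finset.sum_ite_eq,
      mem_univ, if_true]
    rw [sum_X_mul_leadQuot_X_mul]
  have h₂ : ∑ a, X (v a) * koszulCoeff v a m (D a) = -leadQuot v m (X (v m) * D m) := by
    simp only [X_mul_koszulCoeff hv, ite_zero_eq_sub_ite, Finset.sum_sub_distrib,
      Finset.sum_ite_eq', mem_univ, if_true]
    rw [← map_sum, hD, map_zero, zero_sub]
  rw [mul_sub, h₁, h₂]
  ring

end Koszul

section Shear

lemma totalDegree_aeval_le {σ τ : Type*} (φ : σ → MvPolynomial τ R)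
    (hφ : ∀ i, (φ i).totalDegree ≤ 1) (P : MvPolynomial σ R) :
    (aeval φ P).totalDegree ≤ P.totalDegree := by
  conv_lhs => rw [P.as_sum, map_sum]
  refine totalDegree_finsetSum_le fun m hm => ?_
  rw [aeval_monomial, algebraMap_eq]
  refine (totalDegree_mul _ _).trans ?_
  rw [totalDegree_C, zero_add, Finsupp.prod]
  refine (totalDegree_finsetProd _ _).trans ((Finset.sum_le_sum fun i _ => ?_).trans
    (le_totalDegree hm))
  exact (totalDegree_pow _ _).trans ((Nat.mul_le_mul_left _ (hφ i)).trans (mul_one _).le)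

def shearY : MvPolynomial (Fin n ⊕ Fin n) R →ₐ[R] MvPolynomial (Fin n ⊕ Fin n) R :=
  aeval (Sum.elim (fun i => X (Sum.inl i)) fun i => X (Sum.inl i) - X (Sum.inr i))

@[simp] lemma shearY_X_inl (i : Fin n) :
    shearY (X (Sum.inl i) : MvPolynomial (Fin n ⊕ Fin n) R) = X (Sum.inl i) := by
  simp [shearY]

@[simp] lemma shearY_X_inr (i : Fin n) :
    shearY (X (Sum.inr i) : MvPolynomial (Fin n ⊕ Fin n) R) = X (Sum.inl i) - X (Sum.inr i) := by
  simp [shearY]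

@[simp] lemma shearY_shearY (P : MvPolynomial (Fin n ⊕ Fin n) R) : shearY (shearY P) = P := by
  change (shearY.comp shearY) P = AlgHom.id R _ P
  congr 1
  ext (i | i) <;> simp

lemma shearY_X_inl_sub_X_inr (i : Fin n) :
    shearY (X (Sum.inl i) - X (Sum.inr i) : MvPolynomial (Fin n ⊕ Fin n) R) = X (Sum.inr i) := by
  simp

lemma mdeg_shearY_le (P : MvPolynomial (Fin n ⊕ Fin n) R) : mdeg (shearY P) ≤ mdeg P := by
  by_cases hP : P = 0
  · simp [hP]
  have hP' : shearY P ≠ 0 := fun h => hP (by rw [← shearY_shearY P, h, map_zero])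
  rw [mdeg_eq_totalDegree hP, mdeg_eq_totalDegree hP']
  refine WithBot.coe_le_coe.2 (Nat.cast_le.2 (totalDegree_aeval_le _ (fun v => ?_) P))
  have hX (s : Fin n ⊕ Fin n) : (X s : MvPolynomial (Fin n ⊕ Fin n) R).totalDegree ≤ 1 :=
    (totalDegree_monomial_le _ _).trans (by simp)
  rcases v with i | i
  · exact hX _
  · exact (totalDegree_sub _ _).trans (max_le (hX _) (hX _))

lemma isLeftRegular_X_inl_sub_X_inr (i : Fin n) :
    IsLeftRegular (X (Sum.inl i) - X (Sum.inr i) : MvPolynomial (Fin n ⊕ Fin n) R) := by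
  intro p q h
  have := congrArg shearY h
  simp only [map_mul, shearY_X_inl_sub_X_inr, X_mul_cancel_left_iff] at this
  simpa using congrArg shearY this

theorem exists_koszul_of_sum_sub_mul_eq_zero (D : Fin n → MvPolynomial (Fin n ⊕ Fin n) R)
    (hD : ∑ k, (X (Sum.inl k) - X (Sum.inr k)) * D k = 0) (e : ℤ)
    (hdeg : ∀ k, mdeg (D k) ≤ e) :
    ∃ c : Fin n → Fin n → MvPolynomial (Fin n ⊕ Fin n) R, (∀ a b, mdeg (c a b) ≤ (e - 1 : ℤ)) ∧
      ∀ m, D m = ∑ b, (X (Sum.inl b) - X (Sum.inr b)) * c m b -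
        ∑ a, (X (Sum.inl a) - X (Sum.inr a)) * c a m := by
  have hD' : ∑ k, X (Sum.inr k) * shearY (D k) = 0 := by
    simpa using congrArg shearY hD
  obtain ⟨c, hc, hcD⟩ := exists_koszul_of_sum_X_mul_eq_zero Sum.inr_injective _ hD' e
    fun k => (mdeg_shearY_le _).trans (hdeg k)
  refine ⟨fun a b => shearY (c a b), fun a b => (mdeg_shearY_le _).trans (hc a b), fun m => ?_⟩
  simpa using congrArg shearY (hcD m)

end Shear

section Determinant

open scoped Matrix

variable {ι A : Type*} [Fintype ι] [DecidableEq ι] [CommRing A]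

lemma Matrix.det_updateCol_sum_smul {κ : Type*} (M : Matrix ι ι A) (j : ι) (s : Finset κ)
    (c : κ → A) (u : κ → ι → A) :
    (M.updateCol j (∑ i ∈ s, c i • u i)).det = ∑ i ∈ s, c i * (M.updateCol j (u i)).det := by
  classical
  induction s using Finset.induction with
  | empty => exact Matrix.det_eq_zero_of_column_eq_zero j fun i => by simp
  | insert a s ha ih =>
    rw [Finset.sum_insert ha, Matrix.det_updateCol_add, Matrix.det_updateCol_smul, ih,
      Finset.sum_insert ha]

/-- Replacing row `b` by `ℓ ᵥ* M` multiplies the determinant by `ℓ b` and removes the `e_b`-part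
of column `j`, which becomes `ℓ b • eₐ`; then cancel `ℓ b`. -/
theorem Matrix.det_updateCol_koszul (M : Matrix ι ι A) (ℓ : ι → A) (j : ι) {a b : ι}
    (hab : a ≠ b) (hb : IsLeftRegular (ℓ b)) :
    (M.updateCol j (ℓ b • Pi.single a 1 - ℓ a • Pi.single b 1)).det =
      ((M.updateCol j (Pi.single a 1)).updateRow b (Function.update (ℓ ᵥ* M) j 0)).det := by
  set P := M.updateCol j (ℓ b • Pi.single a 1 - ℓ a • Pi.single b 1)
  set Q := (M.updateCol j (Pi.single a 1)).updateRow b (Function.update (ℓ ᵥ* M) j 0)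
  have hrow : ∑ k, ℓ k • P k = Function.update (ℓ ᵥ* M) j 0 := by
    ext c
    rw [← Matrix.vecMul_eq_sum]
    by_cases hc : c = j
    · subst hc
      simp [P, Matrix.vecMul, dotProduct, Pi.single_apply, mul_sub, Finset.sum_sub_distrib]
      ring
    · simp [P, Matrix.vecMul, dotProduct, hc]
  have hPQ :
      P.updateRow b (Function.update (ℓ ᵥ* M) j 0) = Q.updateCol j (ℓ b • Pi.single a 1) := by
    ext r c
    by_cases hr : r = b <;> by_cases hc : c = j <;>
      simp [P, Q, Matrix.updateRow_apply, hr, hc, Pi.single_apply, hab]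
  have hQ : Q.updateCol j (Pi.single a 1) = Q := by
    ext r c
    by_cases hr : r = b <;> by_cases hc : c = j <;>
      simp [Q, Matrix.updateRow_apply, hr, hc, Pi.single_apply, hab]
  apply hb
  have := Matrix.det_updateRow_sum P b ℓ
  rw [hrow, hPQ, Matrix.det_updateCol_smul, hQ] at this
  simpa using this.symm

end Determinant

@[to_additive]
lemma prod_univ_eq_mul_mul_mul_prod_erase {M ι : Type*} [CommMonoid M] [Fintype ι]
    [DecidableEq ι] (f : ι → M) {i j k : ι} (hij : i ≠ j) (hik : i ≠ k) (hjk : j ≠ k) :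
    ∏ x, f x = f i * (f j * (f k * ∏ x ∈ ((univ.erase i).erase j).erase k, f x)) := by
  rw [mul_prod_erase _ f (mem_erase.2 ⟨hjk.symm, mem_erase.2 ⟨hik.symm, mem_univ k⟩⟩),
    mul_prod_erase _ f (mem_erase.2 ⟨hij.symm, mem_univ j⟩), mul_prod_erase univ f (mem_univ i)]

section Bordered

open scoped Matrix

def IsBoundedDiffDeriv (G : MvPolynomial (Fin n) R) (D : Fin n → MvPolynomial (Fin n ⊕ Fin n) R)
    (e : ℤ) : Prop :=
  IsDiffDeriv G D ∧ ∀ k, mdeg (D k) ≤ (e - 1 : ℤ)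

lemma IsBoundedDiffDeriv.of_isMonotonous {G : MvPolynomial (Fin n) R}
    {D : Fin n → MvPolynomial (Fin n ⊕ Fin n) R} {e : ℤ}
    (h : IsDiffDeriv G D ∧ IsMonotonous G D) (hG : mdeg G ≤ e) : IsBoundedDiffDeriv G D e :=
  ⟨h.1, fun k => mdeg_le_sub_one ((h.2 k).trans hG)⟩

lemma IsBoundedDiffDeriv.sub {G : MvPolynomial (Fin n) R}
    {D D' : Fin n → MvPolynomial (Fin n ⊕ Fin n) R} {e : ℤ} (h : IsBoundedDiffDeriv G D e) (h' : IsBoundedDiffDeriv G D' e) :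
    IsBoundedDiffDeriv 0 (D' - D) e := by
  refine ⟨?_, fun k => (mdeg_sub_le _ _).trans (max_le (h'.2 k) (h.2 k))⟩
  have := congrArg₂ (· - ·) h'.1 h.1
  simp only [← Finset.sum_sub_distrib, ← mul_sub, sub_self] at this
  simpa [IsDiffDeriv] using this

/-- `∑ (d c - 1) + 1 - dᵢ - dⱼ` bounds the degree of what is left of a Leibniz term of the
bordered determinant once its factors `Gᵢ(x)` and `Gⱼ(y)` are taken out. -/
def AnnulsCrossTerms {ι : Type*} [Fintype ι] (L₁ L₂ : MvPolynomial (Fin n) R →ₗ[R] R)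
    (G : ι → MvPolynomial (Fin n) R) (d : ι → ℤ) : Prop :=
  ∀ i j, i ≠ j → ∀ p q : MvPolynomial (Fin n) R,
    (p.totalDegree + q.totalDegree : ℤ) + d i + d j ≤ ∑ c, (d c - 1) + 1 →
      L₁ (G i * p) = 0 ∨ L₂ (G j * q) = 0

def borderedMatrix (G : Fin (n + 1) → MvPolynomial (Fin n) R)
    (DG : Fin (n + 1) → Fin n → MvPolynomial (Fin n ⊕ Fin n) R) :
    Matrix (Fin (n + 1)) (Fin (n + 1)) (MvPolynomial (Fin n ⊕ Fin n) R) :=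
  Matrix.of fun r c => Fin.lastCases (toX (G c)) (DG c) r

@[simp] lemma borderedMatrix_last (G DG) (c : Fin (n + 1)) :
    borderedMatrix (R := R) G DG (Fin.last n) c = toX (G c) := by
  simp [borderedMatrix]

@[simp] lemma borderedMatrix_castSucc (G DG) (k : Fin n) (c : Fin (n + 1)) :
    borderedMatrix (R := R) G DG k.castSucc c = DG c k := by
  simp [borderedMatrix]

def borderRow : Fin (n + 1) → MvPolynomial (Fin n ⊕ Fin n) R :=
  Fin.lastCases (-1) fun k => X (Sum.inl k) - X (Sum.inr k)

@[simp] lemma borderRow_last : borderRow (R := R) (Fin.last n) = -1 := by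
  simp [borderRow]

@[simp] lemma borderRow_castSucc (k : Fin n) :
    borderRow (R := R) k.castSucc = X (Sum.inl k) - X (Sum.inr k) := by
  simp [borderRow]

lemma borderRow_vecMul_borderedMatrix {G DG} {c : Fin (n + 1)} (h : IsDiffDeriv (G c) (DG c)) :
    (borderRow ᵥ* borderedMatrix (R := R) G DG) c = -toY (G c) := by
  simp only [Matrix.vecMul, dotProduct, Fin.sum_univ_castSucc, borderRow_castSucc,
    borderedMatrix_castSucc, borderRow_last, borderedMatrix_last]
  rw [h]
  ring

lemma ddetX_eq_det_borderedMatrix (f : Fin n → MvPolynomial (Fin n) R)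
    (Df : Fin n → Fin n → MvPolynomial (Fin n ⊕ Fin n) R) (F : MvPolynomial (Fin n) R)
    (DF : Fin n → MvPolynomial (Fin n ⊕ Fin n) R) :
    ddetX f Df F DF = (borderedMatrix (Fin.snoc f F) (Fin.snoc Df DF)).det := by
  rw [ddetX]
  congr 1
  ext r c
  induction r using Fin.lastCases <;> induction c using Fin.lastCases <;> simp [Fin.snoc]

end Bordered

section Vanishing

open scoped Matrix

variable {L₁ L₂ : MvPolynomial (Fin n) R →ₗ[R] R} {G : Fin (n + 1) → MvPolynomial (Fin n) R}
  {d : Fin (n + 1) → ℤ}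

lemma applyXY_mul_prod_perm_eq_zero (hkill : AnnulsCrossTerms L₁ L₂ G d)
    (Q : Matrix (Fin (n + 1)) (Fin (n + 1)) (MvPolynomial (Fin n ⊕ Fin n) R)) (j₀ : Fin (n + 1))
    {a b : Fin n} (hab : a ≠ b) (hQj : ∀ r, r ≠ a.castSucc → Q r j₀ = 0)
    (hQa : Q a.castSucc j₀ = 1) (hQlast : ∀ i, i ≠ j₀ → Q (Fin.last n) i = toX (G i))
    (hQb : ∀ i, i ≠ j₀ → Q b.castSucc i = -toY (G i))
    (hQdeg : ∀ k i, k ≠ b → i ≠ j₀ → mdeg (Q k.castSucc i) ≤ (d i - 1 : ℤ))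
    {P : MvPolynomial (Fin n ⊕ Fin n) R} (hP : mdeg P ≤ (d j₀ - 2 : ℤ))
    (τ : Equiv.Perm (Fin (n + 1))) :
    applyXY L₁ L₂ (P * ∏ i, Q (τ i) i) = 0 := by
  classical
  by_cases hτ : τ j₀ = a.castSucc
  swap
  · rw [Finset.prod_eq_zero (f := fun i => Q (τ i) i) (mem_univ j₀) (hQj _ hτ), mul_zero, map_zero]
  set i₀ := τ.symm (Fin.last n)
  set j₁ := τ.symm b.castSucc
  have hi₀ : i₀ ≠ j₀ := fun h =>
    (Fin.castSucc_lt_last a).ne' (by rw [← hτ, ← h, τ.apply_symm_apply])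
  have hj₁ : j₁ ≠ j₀ := fun h =>
    hab (Fin.castSucc_injective _ (by rw [← hτ, ← h, τ.apply_symm_apply]))
  have hi₀j₁ : i₀ ≠ j₁ := fun h => (Fin.castSucc_lt_last b).ne' (by
    rw [← τ.apply_symm_apply (Fin.last n), ← τ.apply_symm_apply b.castSucc]; exact congrArg τ h)
  set s := ((univ.erase j₀).erase i₀).erase j₁
  have hs : ∀ i ∈ s, mdeg (Q (τ i) i) ≤ (d i - 1 : ℤ) := by
    intro i hi
    simp only [s, mem_erase] at hi
    obtain ⟨k, hk⟩ := Fin.eq_castSucc_of_ne_last (fun h => hi.2.1 (τ.symm_apply_eq.2 h.symm).symm)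
    rw [← hk]
    exact hQdeg k i (fun h => hi.1 (τ.symm_apply_eq.2 (by rw [← hk, h])).symm) hi.2.2.1
  rw [prod_univ_eq_mul_mul_mul_prod_erase _ hi₀.symm hj₁.symm hi₀j₁, hτ, hQa,
    τ.apply_symm_apply, τ.apply_symm_apply, hQlast i₀ hi₀, hQb j₁ hj₁,
    show ∀ x y z : MvPolynomial (Fin n ⊕ Fin n) R, P * (1 * (x * (-y * z))) = x * y * -(P * z)
      from fun x y z => by ring]
  refine applyXY_toX_mul_toY_mul_eq_zero L₁ L₂ _ _ _ (∑ c, (d c - 1) + 1 - d i₀ - d j₁) ?_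
    fun p q h => hkill i₀ j₁ hi₀j₁ p q (by linarith)
  have hsum := sum_univ_eq_add_add_add_sum_erase (fun c => d c - 1) hi₀.symm hj₁.symm hi₀j₁
  rw [mdeg_neg]
  refine (mdeg_mul_le _ _).trans ((add_le_add hP (mdeg_prod_le s _ _ hs)).trans ?_)
  rw [← WithBot.coe_add]
  exact WithBot.coe_le_coe.2 (by linarith)

theorem applyXY_det_borderedMatrix_eq_zero (hkill : AnnulsCrossTerms L₁ L₂ G d)
    {DG : Fin (n + 1) → Fin n → MvPolynomial (Fin n ⊕ Fin n) R} (j₀ : Fin (n + 1))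
    (hG : G j₀ = 0) (hDG : ∀ c, IsBoundedDiffDeriv (G c) (DG c) (d c)) :
    applyXY L₁ L₂ (borderedMatrix G DG).det = 0 := by
  classical
  set N := borderedMatrix G DG
  set e : Fin n → Fin (n + 1) → MvPolynomial (Fin n ⊕ Fin n) R := fun a => Pi.single a.castSucc 1
  set u : Fin n → Fin n → Fin (n + 1) → MvPolynomial (Fin n ⊕ Fin n) R := fun a b =>
    borderRow (R := R) b.castSucc • e a - borderRow (R := R) a.castSucc • e b
  obtain ⟨c, hc, hcD⟩ := exists_koszul_of_sum_sub_mul_eq_zero (DG j₀)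
    (by simpa [IsDiffDeriv, hG] using (hDG j₀).1) (d j₀ - 1) (hDG j₀).2
  have hcol : (fun r => N r j₀) = ∑ ab : Fin n × Fin n, c ab.1 ab.2 • u ab.1 ab.2 := by
    funext r
    induction r using Fin.lastCases with
    | last => simp [N, u, e, hG]
    | cast k =>
      simp [N, u, e, hcD k, Finset.sum_apply, Pi.single_apply, Fintype.sum_prod_type, mul_sub,
        mul_comm]
  rw [← Matrix.updateCol_eq_self N j₀, hcol, Matrix.det_updateCol_sum_smul, map_sum]
  refine Finset.sum_eq_zero fun ⟨a, b⟩ _ => ?_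
  rcases eq_or_ne a b with rfl | hab
  · have : (N.updateCol j₀ 0).det = 0 := Matrix.det_eq_zero_of_column_eq_zero j₀ fun r => by simp
    simp [u, this]
  rw [Matrix.det_updateCol_koszul _ _ _ ((Fin.castSucc_injective n).ne hab)
    (by simpa using isLeftRegular_X_inl_sub_X_inr b), Matrix.det_apply, Finset.mul_sum, map_sum]
  refine Finset.sum_eq_zero fun τ _ => ?_
  rw [Units.smul_def, mul_smul_comm, map_zsmul]
  refine (congrArg _ (applyXY_mul_prod_perm_eq_zero hkill _ j₀ hab ?_ ?_ ?_ ?_ ?_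
    ((hc a b).trans_eq (by congr 1; ring)) τ)).trans (smul_zero _)
  · intro r hr
    by_cases hrb : r = b.castSucc <;> simp [Matrix.updateRow_apply, hrb, hr]
  · simp [Matrix.updateRow_apply, hab]
  · intro i hi
    simp [Matrix.updateRow_apply, (Fin.castSucc_lt_last b).ne', hi, N]
  · intro i hi
    simpa [hi] using borderRow_vecMul_borderedMatrix (hDG i).1
  · intro k i hk hi
    simpa [Matrix.updateRow_apply, hk, hi, N] using (hDG i).2 k

end Vanishing

section Exchange

variable {L₁ L₂ : MvPolynomial (Fin n) R →ₗ[R] R} {G : Fin (n + 1) → MvPolynomial (Fin n) R}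
  {d : Fin (n + 1) → ℤ}

lemma AnnulsCrossTerms.update_zero (h : AnnulsCrossTerms L₁ L₂ G d) (j : Fin (n + 1)) :
    AnnulsCrossTerms L₁ L₂ (Function.update G j 0) d := by
  intro i i' hii' p q hpq
  rcases h i i' hii' p q hpq with h | h
  · by_cases hi : i = j
    · simp [hi]
    · simp [hi, h]
  · by_cases hi' : i' = j
    · simp [hi']
    · simp [hi', h]

theorem applyXY_det_borderedMatrix_update (hkill : AnnulsCrossTerms L₁ L₂ G d)
    {DG : Fin (n + 1) → Fin n → MvPolynomial (Fin n ⊕ Fin n) R}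
    (hDG : ∀ c, IsBoundedDiffDeriv (G c) (DG c) (d c)) (j : Fin (n + 1))
    {D : Fin n → MvPolynomial (Fin n ⊕ Fin n) R} (hD : IsBoundedDiffDeriv (G j) D (d j)) :
    applyXY L₁ L₂ (borderedMatrix G (Function.update DG j D)).det =
      applyXY L₁ L₂ (borderedMatrix G DG).det := by
  classical
  set N := borderedMatrix G DG
  set N₀ := borderedMatrix (Function.update G j 0) (Function.update DG j (D - DG j))
  have hN₀ : N₀ = N.updateCol j fun r => N₀ r j := by
    ext r c
    by_cases hc : c = j
    · simp [hc]
    · induction r using Fin.lastCases <;> simp [N, N₀, hc]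
  have hN' : borderedMatrix G (Function.update DG j D) =
      N.updateCol j ((fun r => N₀ r j) + fun r => N r j) := by
    ext r c
    by_cases hc : c = j
    · subst hc
      induction r using Fin.lastCases <;> simp [N, N₀]
    · induction r using Fin.lastCases <;> simp [N, hc]
  have hvanish : applyXY L₁ L₂ N₀.det = 0 := by
    refine applyXY_det_borderedMatrix_eq_zero (hkill.update_zero j) j (by simp) fun c => ?_
    by_cases hc : c = j
    · subst hc
      simpa using (hDG c).sub hD
    · simpa [hc] using hDG c
  rw [hN', Matrix.det_updateCol_add, ← hN₀, Matrix.updateCol_eq_self, map_add, hvanish, zero_add]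

theorem applyXY_det_borderedMatrix_eq (hkill : AnnulsCrossTerms L₁ L₂ G d)
    {DG DG' : Fin (n + 1) → Fin n → MvPolynomial (Fin n ⊕ Fin n) R}
    (hDG : ∀ c, IsBoundedDiffDeriv (G c) (DG c) (d c))
    (hDG' : ∀ c, IsBoundedDiffDeriv (G c) (DG' c) (d c)) :
    applyXY L₁ L₂ (borderedMatrix G DG).det = applyXY L₁ L₂ (borderedMatrix G DG').det := by
  classical
  suffices h : ∀ s : Finset (Fin (n + 1)),
      applyXY L₁ L₂ (borderedMatrix G fun c => if c ∈ s then DG' c else DG c).det =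
        applyXY L₁ L₂ (borderedMatrix G DG).det by
    simpa using (h univ).symm
  intro s
  induction s using Finset.induction with
  | empty => simp
  | insert a s ha ih =>
    have hmix : ∀ c, IsBoundedDiffDeriv (G c) (if c ∈ s then DG' c else DG c) (d c) := fun c => by
      split_ifs
      exacts [hDG' c, hDG c]
    have : (fun c => if c ∈ insert a s then DG' c else DG c) =
        Function.update (fun c => if c ∈ s then DG' c else DG c) a (DG' a) := by
      funext c
      by_cases hc : c = a
      · simp [hc]
      · simp [hc]
    rw [this, applyXY_det_borderedMatrix_update hkill hmix a (hDG' a), ih]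

end Exchange

lemma isBoundedDiffDeriv_snoc {f : Fin n → MvPolynomial (Fin n) R}
    {Df : Fin n → Fin n → MvPolynomial (Fin n ⊕ Fin n) R} {F : MvPolynomial (Fin n) R}
    {DF : Fin n → MvPolynomial (Fin n ⊕ Fin n) R} {e : ℤ}
    (hDf : ∀ i, IsDiffDeriv (f i) (Df i) ∧ IsMonotonous (f i) (Df i))
    (hDF : IsDiffDeriv F DF ∧ IsMonotonous F DF) (hF : mdeg F ≤ e) (c : Fin (n + 1)) :
    IsBoundedDiffDeriv (Fin.snoc (α := fun _ => _) f F c) (Fin.snoc (α := fun _ => _) Df DF c)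
      (Fin.snoc (α := fun _ => ℤ) (fun i => ((f i).totalDegree : ℤ)) e c) := by
  induction c using Fin.lastCases with
  | last => simpa using IsBoundedDiffDeriv.of_isMonotonous hDF hF
  | cast i => simpa using IsBoundedDiffDeriv.of_isMonotonous (hDf i) (mdeg_le_totalDegree _)

lemma Annuls.apply_mul_eq_zero {f : Fin n → MvPolynomial (Fin n) R}
    {L : MvPolynomial (Fin n) R →ₗ[R] R} {e : ℤ} (hL : Annuls L (boundedSpan f e)) (v : Fin n)
    {g : MvPolynomial (Fin n) R} (hg : ((f v).totalDegree + g.totalDegree : ℤ) ≤ e) :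
    L (f v * g) = 0 := by
  classical
  refine hL _ ⟨Pi.single v g, by simp [Pi.single_apply], fun i => ?_⟩
  by_cases hi : i = v
  · subst hi
    simpa using (add_le_add (mdeg_le_totalDegree _) (mdeg_le_totalDegree _)).trans
      (by exact_mod_cast hg)
  · simp [hi]

lemma annulsCrossTerms_snoc {f : Fin n → MvPolynomial (Fin n) R} {δ₁ δ₂ : ℤ} (hδ₁ : 0 ≤ δ₁)
    (hδ₂ : 0 ≤ δ₂) {L₁ L₂ : MvPolynomial (Fin n) R →ₗ[R] R}
    (hL₁ : Annuls L₁ (boundedSpan f ((deltaF f + δ₁ : ℤ) : WithBot ℤ)))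
    (hL₂ : Annuls L₂ (boundedSpan f ((deltaF f + δ₂ : ℤ) : WithBot ℤ)))
    (F : MvPolynomial (Fin n) R) :
    AnnulsCrossTerms L₁ L₂ (Fin.snoc f F)
      (Fin.snoc (fun i => ((f i).totalDegree : ℤ)) (deltaF f + δ₁ + δ₂ + 1)) := by
  intro i j hij p q h
  have hsum : ∑ c, ((Fin.snoc (fun i => ((f i).totalDegree : ℤ)) (deltaF f + δ₁ + δ₂ + 1) :
      Fin (n + 1) → ℤ) c - 1) = deltaF f + (deltaF f + δ₁ + δ₂) := by
    simp [Fin.sum_univ_castSucc, deltaF]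
    ring
  rw [hsum] at h
  have hp : (0 : ℤ) ≤ p.totalDegree := by positivity
  have hq : (0 : ℤ) ≤ q.totalDegree := by positivity
  induction i using Fin.lastCases with
  | last =>
    induction j using Fin.lastCases with
    | last => exact absurd rfl hij
    | cast w =>
      right
      simp only [Fin.snoc_castSucc, Fin.snoc_last] at h ⊢
      exact hL₂.apply_mul_eq_zero w (by linarith)
  | cast v =>
    induction j using Fin.lastCases with
    | last =>
      left
      simp only [Fin.snoc_castSucc, Fin.snoc_last] at h ⊢
      exact hL₁.apply_mul_eq_zero v (by linarith)
    | cast w =>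
      simp only [Fin.snoc_castSucc] at h ⊢
      by_cases hv : ((f v).totalDegree + p.totalDegree : ℤ) ≤ deltaF f + δ₁
      · exact Or.inl (hL₁.apply_mul_eq_zero v hv)
      · exact Or.inr (hL₂.apply_mul_eq_zero w (by linarith))

theorem extension_independent_of_choices_general {R : Type*} [CommRing R] {n : ℕ}
    (f : Fin n → MvPolynomial (Fin n) R)
    (δ₁ δ₂ : ℤ) (hδ₁ : 0 ≤ δ₁) (hδ₂ : 0 ≤ δ₂)
    (L₁ L₂ : MvPolynomial (Fin n) R →ₗ[R] R)
    (hL₁ : Annuls L₁ (boundedSpan f ((deltaF f + δ₁ : ℤ) : WithBot ℤ)))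
    (hL₂ : Annuls L₂ (boundedSpan f ((deltaF f + δ₂ : ℤ) : WithBot ℤ)))
    (F : MvPolynomial (Fin n) R)
    (hF : mdeg F ≤ ((deltaF f + δ₁ + δ₂ + 1 : ℤ) : WithBot ℤ))
    (Df' Df'' : Fin n → Fin n → MvPolynomial (Fin n ⊕ Fin n) R)
    (hDf' : ∀ i, IsDiffDeriv (f i) (Df' i) ∧ IsMonotonous (f i) (Df' i))
    (hDf'' : ∀ i, IsDiffDeriv (f i) (Df'' i) ∧ IsMonotonous (f i) (Df'' i))
    (DF' DF'' : Fin n → MvPolynomial (Fin n ⊕ Fin n) R)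
    (hDF' : IsDiffDeriv F DF' ∧ IsMonotonous F DF')
    (hDF'' : IsDiffDeriv F DF'' ∧ IsMonotonous F DF'') :
    L₁ (applyY L₂ (ddetX f Df' F DF')) = L₁ (applyY L₂ (ddetX f Df'' F DF'')) := by
  rw [← applyXY_apply, ← applyXY_apply, ddetX_eq_det_borderedMatrix, ddetX_eq_det_borderedMatrix]
  exact applyXY_det_borderedMatrix_eq (annulsCrossTerms_snoc hδ₁ hδ₂ hL₁ hL₂ F)
    (isBoundedDiffDeriv_snoc hDf' hDF' hF) (isBoundedDiffDeriv_snoc hDf'' hDF'' hF)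

/-- Theorem 3.1: on polynomials of degree `≤ δ_f + δ₁ + δ₂ + 1`, the
extended functional `L₁(x_*).L₂(y_*).det‖∇f ∇F; f(x) F(x)‖` does not depend on the
choices of the monotonous difference derivatives `∇fᵢ` and `∇F`. -/
theorem extension_independent_of_choices {R : Type*} [CommRing R] {n : ℕ}
    (f : Fin n → MvPolynomial (Fin n) R) (hf : ∀ i, (1 : WithBot ℤ) ≤ mdeg (f i))
    (δ₁ δ₂ : ℤ) (hδ₁ : 0 ≤ δ₁) (hδ₂ : 0 ≤ δ₂)
    (L₁ L₂ : MvPolynomial (Fin n) R →ₗ[R] R)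
    (hL₁ : Annuls L₁ (boundedSpan f ((deltaF f + δ₁ : ℤ) : WithBot ℤ)))
    (hL₂ : Annuls L₂ (boundedSpan f ((deltaF f + δ₂ : ℤ) : WithBot ℤ)))
    (F : MvPolynomial (Fin n) R)
    (hF : mdeg F ≤ ((deltaF f + δ₁ + δ₂ + 1 : ℤ) : WithBot ℤ))
    (Df' Df'' : Fin n → Fin n → MvPolynomial (Fin n ⊕ Fin n) R)
    (hDf' : ∀ i, IsDiffDeriv (f i) (Df' i) ∧ IsMonotonous (f i) (Df' i))
    (hDf'' : ∀ i, IsDiffDeriv (f i) (Df'' i) ∧ IsMonotonous (f i) (Df'' i))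
    (DF' DF'' : Fin n → MvPolynomial (Fin n ⊕ Fin n) R)
    (hDF' : IsDiffDeriv F DF' ∧ IsMonotonous F DF')
    (hDF'' : IsDiffDeriv F DF'' ∧ IsMonotonous F DF'') :
    L₁ (applyY L₂ (ddetX f Df' F DF')) = L₁ (applyY L₂ (ddetX f Df'' F DF'')) :=
  extension_independent_of_choices_general f δ₁ δ₂ hδ₁ hδ₂ L₁ L₂ hL₁ hL₂ F hF Df' Df'' hDf' hDf''
    DF' DF'' hDF' hDF''
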